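/- arXiv:1712.06431 — 6 statements merged into one kernel-verified Lean document; each statement's English description precedes it below -/
import Mathlib

section
/- For any finite set V of points in the plane with pairwise distinct distances, the Euclidean minimum spanning tree of V is a subgraph of the relative neighborhood graph of V; that is, every edge uv of the EMST satisfies the empty-lens property: there is no point w in V \ {u,v} with |uw| < |uv| and |vw| < |uv|. -/
noncomputable section

/-- Points of the plane. -/
abbrev Pt := EuclideanSpace ℝ (Fin 2)

/-- The relative neighborhood graph of a finite point set `V`:
`u` and `v` are adjacent iff they are distinct points of `V` and no `w ∈ V \ {u,v}`
lies in the lens of `u` and `v`. -/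
def rng (V : Finset Pt) : SimpleGraph Pt where
  Adj u v := u ≠ v ∧ u ∈ V ∧ v ∈ V ∧
    ∀ w ∈ V, w ≠ u → w ≠ v → ¬ (dist u w < dist u v ∧ dist v w < dist u v)
  symm := ⟨by
    rintro u v ⟨h1, h2, h3, h4⟩
    refine ⟨h1.symm, h3, h2, fun w hw hwv hwu h => ?_⟩
    rw [dist_comm v u] at h
    exact h4 w hw hwu hwv ⟨h.2, h.1⟩⟩
  loopless := ⟨fun u h => h.1 rfl⟩

/-- The Euclidean length of an edge between two points of `V`. -/
def edgeLen {V : Finset Pt} : Sym2 {x // x ∈ V} → ℝ :=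
  Sym2.lift ⟨fun a b => dist (a : Pt) (b : Pt), fun _ _ => dist_comm _ _⟩

/-- The total Euclidean weight of a graph on the points of `V`. -/
def treeWeight {V : Finset Pt} (T : SimpleGraph {x // x ∈ V}) : ℝ :=
  ∑ e ∈ T.edgeSet.toFinite.toFinset, edgeLen e

/-- General position: all pairwise distances between points of `V` are distinct. -/
def GenPos (V : Finset Pt) : Prop :=
  ∀ u v x y : Pt, u ∈ V → v ∈ V → x ∈ V → y ∈ V → u ≠ v → x ≠ y →
    s(u, v) ≠ s(x, y) → dist u v ≠ dist x y

/-!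
Cut exchange: deleting an edge `uv` from a tree splits it into the component of `u` and the
component of `v`, and adding any edge `xy` with `x` on the side of `u` and `y` on the side of `v`
gives a tree again. Its weight exceeds that of the minimal tree by `|xy| - |uv|`, so
`|uv| ≤ |xy|`. A point `w` in the lens of `uv` lies on one of the two sides; on the side of `u`
the exchange edge `wv` is shorter than `uv`, on the side of `v` the edge `uw` is.
-/

open SimpleGraph

namespace SimpleGraph

variable {α : Type*}

lemma Reachable.deleteEdges_reachable_or {G : SimpleGraph α} {x u : α} (h : G.Reachable x u)
    (v : α) :
    (G.deleteEdges {s(u, v)}).Reachable x u ∨ (G.deleteEdges {s(u, v)}).Reachable x v := by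
  obtain ⟨p⟩ := h
  induction p with
  | nil => exact Or.inl .rfl
  | @cons a b c hab _ ih =>
    by_cases he : s(a, b) = s(c, v)
    · rcases Sym2.eq_iff.mp he with ⟨rfl, -⟩ | ⟨rfl, -⟩
      · exact Or.inl .rfl
      · exact Or.inr .rfl
    · have hab' : (G.deleteEdges {s(c, v)}).Adj a b := by
        rw [deleteEdges_adj]
        exact ⟨hab, he⟩
      exact ih.imp hab'.reachable.trans hab'.reachable.trans

lemma IsAcyclic.not_reachable_deleteEdges {T : SimpleGraph α} (hT : T.IsAcyclic) {u v x y : α}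
    (huv : T.Adj u v) (hx : (T.deleteEdges {s(u, v)}).Reachable x u)
    (hy : (T.deleteEdges {s(u, v)}).Reachable y v) :
    ¬ (T.deleteEdges {s(u, v)}).Reachable x y := by
  have hcut : ¬ (T.deleteEdges {s(u, v)}).Reachable u v :=
    isBridge_iff.mp (isAcyclic_iff_forall_isBridge.mp hT huv)
  exact fun hxy => hcut (hx.symm.trans (hxy.trans hy))

lemma IsTree.deleteEdges_sup_edge {T : SimpleGraph α} (hT : T.IsTree) {u v x y : α}
    (huv : T.Adj u v) (hx : (T.deleteEdges {s(u, v)}).Reachable x u)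
    (hy : (T.deleteEdges {s(u, v)}).Reachable y v) :
    (T.deleteEdges {s(u, v)} ⊔ edge x y).IsTree := by
  set G := T.deleteEdges {s(u, v)}
  have hxy : ¬ G.Reachable x y := hT.isAcyclic.not_reachable_deleteEdges huv hx hy
  have hG : G ≤ G ⊔ edge x y := le_sup_left
  have hadj : (G ⊔ edge x y).Adj x y :=
    Or.inr ((edge_adj ..).mpr ⟨Or.inl ⟨rfl, rfl⟩, fun h => hxy (h ▸ .rfl)⟩)
  have hreach_v (z : α) : (G ⊔ edge x y).Reachable z v := by
    rcases (hT.connected.preconnected z u).deleteEdges_reachable_or v with hzu | hzv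
    · exact (hzu.trans hx.symm).mono hG |>.trans hadj.reachable |>.trans (hy.mono hG)
    · exact hzv.mono hG
  refine ⟨(connected_iff_exists_forall_reachable _).mpr ⟨v, fun z => (hreach_v z).symm⟩, ?_⟩
  exact (hT.isAcyclic.anti (deleteEdges_le _)).sup_edge_of_not_reachable hxy

end SimpleGraph

lemma treeWeight_eq_finsum {V : Finset Pt} (G : SimpleGraph {x // x ∈ V}) :
    treeWeight G = ∑ᶠ e ∈ G.edgeSet, edgeLen e :=
  (finsum_mem_eq_finite_toFinset_sum _ _).symm

lemma treeWeight_sup_edge {V : Finset Pt} {G : SimpleGraph {x // x ∈ V}} {x y : {x // x ∈ V}}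
    (hxy : ¬ G.Reachable x y) :
    treeWeight (G ⊔ edge x y) = dist (x : Pt) y + treeWeight G := by
  have hne : x ≠ y := fun h => hxy (h ▸ .rfl)
  have hnotin : s(x, y) ∉ G.edgeSet := fun h => hxy (Adj.reachable h)
  rw [treeWeight_eq_finsum, treeWeight_eq_finsum, edgeSet_sup, edgeSet_edge_of_ne hne,
    Set.union_singleton, finsum_mem_insert _ hnotin G.edgeSet.toFinite]
  rfl

lemma treeWeight_deleteEdges {V : Finset Pt} {T : SimpleGraph {x // x ∈ V}}
    {u v : {x // x ∈ V}} (huv : T.Adj u v) :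
    treeWeight T = dist (u : Pt) v + treeWeight (T.deleteEdges {s(u, v)}) := by
  have hsplit : T.edgeSet = insert s(u, v) (T.deleteEdges {s(u, v)}).edgeSet := by
    rw [edgeSet_deleteEdges, Set.insert_sdiff_singleton]
    exact (Set.insert_eq_of_mem (T.mem_edgeSet.mpr huv)).symm
  rw [treeWeight_eq_finsum, treeWeight_eq_finsum, hsplit,
    finsum_mem_insert _ (by simp) (Set.toFinite _)]
  rfl

lemma dist_le_of_reachable_deleteEdges {V : Finset Pt} {T : SimpleGraph {x // x ∈ V}}
    (hT : T.IsTree)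
    (hmin : ∀ T' : SimpleGraph {x // x ∈ V}, T'.IsTree → treeWeight T ≤ treeWeight T')
    {u v x y : {x // x ∈ V}} (huv : T.Adj u v)
    (hx : (T.deleteEdges {s(u, v)}).Reachable x u)
    (hy : (T.deleteEdges {s(u, v)}).Reachable y v) :
    dist (u : Pt) v ≤ dist (x : Pt) y := by
  have hle := hmin _ (hT.deleteEdges_sup_edge huv hx hy)
  rw [treeWeight_sup_edge (hT.isAcyclic.not_reachable_deleteEdges huv hx hy),
    treeWeight_deleteEdges huv] at hle
  linarith

theorem stmt_0_general (V : Finset Pt)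
    (T : SimpleGraph {x // x ∈ V}) (hT : T.IsTree)
    (hmin : ∀ T' : SimpleGraph {x // x ∈ V}, T'.IsTree → treeWeight T ≤ treeWeight T')
    (u v : {x // x ∈ V}) (huv : T.Adj u v) :
    (rng V).Adj (u : Pt) (v : Pt) := by
  refine ⟨fun h => huv.ne (Subtype.ext h), u.2, v.2, fun w hw _ _ ⟨huw, hvw⟩ => ?_⟩
  rcases (hT.connected.preconnected ⟨w, hw⟩ u).deleteEdges_reachable_or v with hwu | hwv
  · have hcut := dist_le_of_reachable_deleteEdges hT hmin huv hwu .rfl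
    rw [dist_comm (v : Pt)] at hvw
    exact (hcut.trans_lt hvw).false
  · have hcut := dist_le_of_reachable_deleteEdges hT hmin huv .rfl hwv
    exact (hcut.trans_lt huw).false

/-- Every edge of the Euclidean minimum spanning tree of `V` is an edge of the
relative neighborhood graph of `V`. -/
theorem stmt_0 (V : Finset Pt) (hgp : GenPos V)
    (T : SimpleGraph {x // x ∈ V}) (hT : T.IsTree)
    (hmin : ∀ T' : SimpleGraph {x // x ∈ V}, T'.IsTree → treeWeight T ≤ treeWeight T')
    (u v : {x // x ∈ V}) (huv : T.Adj u v) :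
    (rng V).Adj (u : Pt) (v : Pt) :=
  stmt_0_general V T hT hmin u v huv

end
end

section
/- In the relative neighborhood graph of a finite planar point set in general position, the angle at a common vertex u between two edges uv and uw is strictly greater than π/3 (60 degrees). -/
noncomputable section

/-!
Let `uv` and `uw` be edges of the relative neighborhood graph with, say, `|uv| < |uw|`.
Since `v` does not block `uw`, the side `vw` is at least `|uw|`, and strictly longer by general
position. So `vw` is the strictly longest side of the triangle `uvw`, and the law of cosines gives
`cos ∠vuw < |uv| / (2|uw|) < 1/2`.
-/

open EuclideanGeometry Real

namespace EuclideanGeometry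

variable {V P : Type*} [NormedAddCommGroup V] [InnerProductSpace ℝ V] [MetricSpace P]
  [NormedAddTorsor V P]

theorem cos_angle_lt_one_half_of_dist_le_of_dist_lt {u v w : P} (hv : dist u v ≤ dist u w)
    (hw : dist u w < dist v w) : cos (∠ v u w) < 1 / 2 := by
  have hlaw := law_cos v u w
  rw [dist_comm v u, dist_comm w u] at hlaw
  by_contra! hcos
  have ha := dist_nonneg (x := u) (y := v)
  nlinarith [mul_nonneg (mul_nonneg ha (ha.trans hv)) (sub_nonneg.2 hcos),
    mul_nonneg ha (sub_nonneg.2 hv), mul_self_lt_mul_self (ha.trans hv) hw]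

theorem pi_div_three_lt_angle_of_dist_le_of_dist_lt {u v w : P} (hv : dist u v ≤ dist u w)
    (hw : dist u w < dist v w) : π / 3 < ∠ v u w := by
  rw [← strictAntiOn_cos.lt_iff_gt ⟨angle_nonneg v u w, angle_le_pi v u w⟩
    ⟨by positivity, by linarith [pi_pos]⟩, cos_pi_div_three]
  exact cos_angle_lt_one_half_of_dist_le_of_dist_lt hv hw

end EuclideanGeometry

theorem GenPos.dist_ne {V : Finset Pt} (hgp : GenPos V) {u v w : Pt} (hu : u ∈ V) (hv : v ∈ V)
    (hw : w ∈ V) (huv : u ≠ v) (huw : u ≠ w) (hvw : v ≠ w) : dist u v ≠ dist u w :=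
  hgp u v u w hu hv hu hw huv huw fun h => by
    rcases Sym2.eq_iff.1 h with ⟨-, h⟩ | ⟨h, -⟩
    exacts [hvw h, huw h]

theorem dist_le_of_rng_adj_of_dist_lt {V : Finset Pt} {u v w : Pt} (huw : (rng V).Adj u w)
    (hv : v ∈ V) (hvu : v ≠ u) (hvw : v ≠ w) (hlt : dist u v < dist u w) :
    dist u w ≤ dist v w := by
  have := huw.2.2.2 v hv hvu hvw
  rw [dist_comm w v] at this
  exact le_of_not_gt fun h => this ⟨hlt, h⟩

/-- Two edges of the relative neighborhood graph sharing the vertex `u`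
make an angle greater than `π/3` at `u`. -/
theorem stmt_2 (V : Finset Pt) (hgp : GenPos V) (u v w : Pt)
    (huv : (rng V).Adj u v) (huw : (rng V).Adj u w) (hvw : v ≠ w) :
    Real.pi / 3 < EuclideanGeometry.angle v u w := by
  wlog hlt : dist u v < dist u w generalizing v w
  · rw [angle_comm]
    exact this w v huw huv hvw.symm <| (hgp.dist_ne huv.2.1 huv.2.2.1 huw.2.2.1 huv.1 huw.1
      hvw).symm.lt_of_le (not_lt.1 hlt)
  obtain ⟨hu_ne_v, -, hv, -⟩ := huv
  have hle := dist_le_of_rng_adj_of_dist_lt huw hv hu_ne_v.symm hvw hlt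
  obtain ⟨hu_ne_w, hu, hw, -⟩ := huw
  have hne : dist w u ≠ dist w v := hgp.dist_ne hw hu hv hu_ne_w.symm hvw.symm hu_ne_v
  rw [dist_comm w u, dist_comm w v] at hne
  exact pi_div_three_lt_angle_of_dist_le_of_dist_lt hlt.le (hle.lt_of_ne hne)
end
end

section
/- Every vertex of the relative neighborhood graph of a finite planar point set in general position has degree at most 6 (in fact at most 5, but degree ≤ 6 suffices). -/
noncomputable section
open Classical

/-!
Fix a reference direction at `u` and measure the direction of every neighbour of `u` as an
oriented angle in `(-π, π]`. If `u` had seven neighbours, two of them would fall into the same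
sixth of this interval, so the angle they subtend at `u` would be less than `π / 3`. But for two
neighbours `v`, `w` of `u` with `|uv| < |uw|`, the relative-neighbourhood condition on the edge
`uw` with witness `v` forces `|vw| > |uw|`, so `vw` is the strictly longest side of the triangle
`uvw` and the law of cosines makes the angle at `u` exceed `π / 3`.
-/

open EuclideanGeometry Real

theorem Real.Angle.abs_toReal_coe_le (x : ℝ) : |(x : Angle).toReal| ≤ |x| := by
  by_cases hx : -π < x ∧ x ≤ π
  · rw [Angle.toReal_coe_eq_self_iff.2 hx]
  · refine (Angle.abs_toReal_le_pi _).trans ?_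
    rw [not_and_or, not_lt, not_le] at hx
    rcases hx with hx | hx <;> cases abs_cases x <;> linarith [pi_pos]

theorem Finset.exists_ne_abs_sub_lt_of_mapsTo_Ioc {ι : Type*} {s : Finset ι} {f : ι → ℝ}
    {a L : ℝ} {n : ℕ} (hL : 0 < L) (hn : 0 < n) (hs : n < s.card)
    (hf : ∀ i ∈ s, f i ∈ Set.Ioc a (a + L)) :
    ∃ i ∈ s, ∃ j ∈ s, i ≠ j ∧ |f i - f j| < L / n := by
  have hn₀ : (0 : ℝ) < n := Nat.cast_pos.2 hn
  set x : ι → ℝ := fun i => (a + L - f i) * n / L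
  have hmaps : ∀ i ∈ s, ⌊x i⌋ ∈ Finset.Ico (0 : ℤ) n := by
    intro i hi
    obtain ⟨hlo, hhi⟩ := hf i hi
    rw [Finset.mem_Ico, Int.floor_nonneg, Int.floor_lt, le_div_iff₀ hL, div_lt_iff₀ hL]
    push_cast
    constructor <;> nlinarith
  obtain ⟨i, hi, j, hj, hij, hfloor⟩ :=
    Finset.exists_ne_map_eq_of_card_lt_of_maps_to (by simpa using hs) hmaps
  refine ⟨i, hi, j, hj, hij, ?_⟩
  have hclose := Int.abs_sub_lt_one_of_floor_eq_floor hfloor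
  rw [← sub_div, ← sub_mul, sub_sub_sub_cancel_left, abs_div, abs_mul, abs_of_pos hL,
    abs_of_pos hn₀, div_lt_one hL] at hclose
  rwa [abs_sub_comm, lt_div_iff₀ hn₀]

namespace EuclideanGeometry

variable {V P : Type*} [NormedAddCommGroup V] [InnerProductSpace ℝ V] [MetricSpace P]
  [NormedAddTorsor V P]

theorem pi_div_three_lt_angle_of_dist_le_of_dist_lt_s3 {p₁ p₂ p₃ : P}
    (h₁₃ : dist p₁ p₂ ≤ dist p₃ p₂) (h₃ : dist p₃ p₂ < dist p₁ p₃) : π / 3 < ∠ p₁ p₂ p₃ := by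
  by_contra! hangle
  have hcos : 1 / 2 ≤ cos (∠ p₁ p₂ p₃) := by
    rw [← cos_pi_div_three]
    exact cos_le_cos_of_nonneg_of_le_pi (angle_nonneg _ _ _) (by linarith [pi_pos]) hangle
  have hlaw := law_cos p₁ p₂ p₃
  have ha : 0 ≤ dist p₁ p₂ := dist_nonneg
  have hb : 0 ≤ dist p₃ p₂ := dist_nonneg
  nlinarith [mul_le_mul_of_nonneg_left hcos (mul_nonneg ha hb), mul_le_mul_of_nonneg_left h₁₃ ha,
    mul_self_lt_mul_self hb h₃]

variable [Module.Oriented ℝ V (Fin 2)] [Fact (Module.finrank ℝ V = 2)]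

theorem angle_le_abs_sub_toReal_oangle {p p₁ p₂ r : P} (hp₁ : p₁ ≠ p) (hp₂ : p₂ ≠ p)
    (hr : r ≠ p) : ∠ p₁ p p₂ ≤ |(∡ r p p₂).toReal - (∡ r p p₁).toReal| := by
  rw [angle_eq_abs_oangle_toReal hp₁ hp₂, ← oangle_sub_left hr hp₁ hp₂]
  conv_lhs => rw [← Angle.coe_toReal (∡ r p p₂), ← Angle.coe_toReal (∡ r p p₁), ← Angle.coe_sub]
  exact Angle.abs_toReal_coe_le _

end EuclideanGeometry

theorem GenPos.dist_ne_dist {V : Finset Pt} (hgp : GenPos V) {a b c : Pt} (ha : a ∈ V)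
    (hb : b ∈ V) (hc : c ∈ V) (hab : a ≠ b) (hac : a ≠ c) (hbc : b ≠ c) :
    dist a b ≠ dist a c :=
  hgp a b a c ha hb ha hc hab hac (Sym2.congr_right.not.2 hbc)

theorem GenPos.pi_div_three_lt_angle_of_adj {V : Finset Pt} (hgp : GenPos V) {u v w : Pt}
    (hv : (rng V).Adj u v) (hw : (rng V).Adj u w) (hvw : v ≠ w) : π / 3 < ∠ v u w := by
  wlog hlt : dist u v < dist u w generalizing v w
  · have hne := hgp.dist_ne_dist hv.2.1 hv.2.2.1 hw.2.2.1 hv.1 hw.1 hvw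
    rw [angle_comm]
    exact this hw hv hvw.symm (hne.lt_or_gt.resolve_left hlt)
  obtain ⟨huv, -, hvV, -⟩ := hv
  obtain ⟨huw, huV, hwV, hrng⟩ := hw
  have hle : dist u w ≤ dist w v := not_lt.1 fun h => hrng v hvV huv.symm hvw ⟨hlt, h⟩
  have hne : dist w u ≠ dist w v := hgp.dist_ne_dist hwV huV hvV huw.symm hvw.symm huv
  rw [dist_comm w u] at hne
  refine pi_div_three_lt_angle_of_dist_le_of_dist_lt_s3 ?_ ?_
  · rw [dist_comm v, dist_comm w]
    exact hlt.le
  · rw [dist_comm w, dist_comm v]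
    exact hle.lt_of_ne hne

instance : Fact (Module.finrank ℝ Pt = 2) := ⟨finrank_euclideanSpace_fin⟩

instance : Module.Oriented ℝ Pt (Fin 2) :=
  ⟨(EuclideanSpace.basisFun (Fin 2) ℝ).toBasis.orientation⟩

/-- Every vertex of the relative neighborhood graph has at most 6 neighbors. -/
theorem stmt_3 (V : Finset Pt) (hgp : GenPos V) (u : Pt) :
    (V.filter (fun v => (rng V).Adj u v)).card ≤ 6 := by
  by_contra! hcard
  obtain ⟨r, hr⟩ := exists_ne u
  obtain ⟨v, hv, w, hw, hvw, hclose⟩ :=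
    Finset.exists_ne_abs_sub_lt_of_mapsTo_Ioc (f := fun v => (∡ r u v).toReal) (a := -π)
      two_pi_pos (by norm_num) hcard
      fun v _ => ⟨Angle.neg_pi_lt_toReal _, by linarith [Angle.toReal_le_pi (∡ r u v)]⟩
  rw [Finset.mem_filter] at hv hw
  have hsmall := angle_le_abs_sub_toReal_oangle hw.2.ne' hv.2.ne' hr
  have hlarge := hgp.pi_div_three_lt_angle_of_adj hw.2 hv.2 hvw.symm
  linarith
end
end

section
/- Kruskal correctness on a subgraph containing the MST: if G is a connected weighted graph with distinct edge weights, H is a subgraph of G containing all MST edges, then running Kruskal's edge-selection on the edges of H (in increasing weight order, adding an edge iff its endpoints are in different components of the edges selected so far) produces exactly the MST of G. -/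
/-!
If `s(a, b)` is an edge of `G` outside the minimum spanning tree `T` and `f` is an edge on the
tree path from `a` to `b`, then exchanging `f` for `s(a, b)` gives another spanning tree, so
`w f ≤ w s(a, b)`, strictly since the weights are distinct. Hence when Kruskal's algorithm reaches
a non-tree edge, every tree edge on the path between its endpoints has already been selected and
the edge is rejected, while a tree edge is never rejected, being a bridge of `T` and all selected
edges being other tree edges. So the selected set is always the set of tree edges processed so far.
-/

noncomputable section
open Classical

variable {V : Type*}

/-- The total weight of the edge set of a graph (with respect to weights `w`). -/
def graphWeight [Finite V] (w : Sym2 V → ℝ) (T : SimpleGraph V) : ℝ :=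
  ∑ e ∈ T.edgeSet.toFinite.toFinset, w e

/-- `T` is a minimum spanning tree of `G` with respect to the weights `w`. -/
def IsMST [Finite V] (G : SimpleGraph V) (w : Sym2 V → ℝ) (T : SimpleGraph V) : Prop :=
  T ≤ G ∧ T.IsTree ∧
    ∀ T' : SimpleGraph V, T' ≤ G → T'.IsTree → graphWeight w T ≤ graphWeight w T'

/-- The endpoints of the edge `e` are joined by the edges in `S`. -/
def Joins (S : Finset (Sym2 V)) (e : Sym2 V) : Prop :=
  ∃ a b : V, e = s(a, b) ∧ (SimpleGraph.fromEdgeSet (S : Set (Sym2 V))).Reachable a b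

/-- One step of Kruskal's algorithm: add the edge `e` to the selected set `S`
iff its endpoints lie in different components of the edges selected so far. -/
def kruskalStep (S : Finset (Sym2 V)) (e : Sym2 V) : Finset (Sym2 V) :=
  if Joins S e then S else insert e S

/-- Kruskal's edge selection, processing the list of edges `L` in order. -/
def kruskal (L : List (Sym2 V)) : Finset (Sym2 V) :=
  L.foldl kruskalStep ∅

namespace SimpleGraph

variable {G : SimpleGraph V}

theorem Reachable.reachable_deleteEdges_or {x y u v : V} (h : G.Reachable u v) :
    (G.deleteEdges {s(x, y)}).Reachable u v ∨
      (((G.deleteEdges {s(x, y)}).Reachable u x ∨ (G.deleteEdges {s(x, y)}).Reachable u y) ∧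
        ((G.deleteEdges {s(x, y)}).Reachable v x ∨ (G.deleteEdges {s(x, y)}).Reachable v y)) := by
  obtain ⟨p⟩ := h
  induction p with
  | nil => exact Or.inl .rfl
  | @cons u w v hadj q ih =>
    by_cases hf : s(u, w) = s(x, y)
    · refine Or.inr ⟨?_, ?_⟩
      · rcases Sym2.eq_iff.mp hf with ⟨rfl, rfl⟩ | ⟨rfl, rfl⟩ <;> simp
      · rcases ih with hwv | ⟨-, hv⟩
        · rcases Sym2.eq_iff.mp hf with ⟨rfl, rfl⟩ | ⟨rfl, rfl⟩
          exacts [Or.inr hwv.symm, Or.inl hwv.symm]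
        · exact hv
    · have hD : (G.deleteEdges {s(x, y)}).Adj u w := by simpa [hf] using hadj
      rcases ih with hwv | ⟨hw, hv⟩
      · exact Or.inl (hD.reachable.trans hwv)
      · exact Or.inr ⟨hw.imp hD.reachable.trans hD.reachable.trans, hv⟩

theorem IsTree.isTree_deleteEdges_sup_edge (hG : G.IsTree) {x y a b : V}
    (hab : ¬(G.deleteEdges {s(x, y)}).Reachable a b) :
    (G.deleteEdges {s(x, y)} ⊔ edge a b).IsTree := by
  set D := G.deleteEdges {s(x, y)}
  have hDle : D ≤ D ⊔ edge a b := le_sup_left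
  have hne : a ≠ b := by rintro rfl; exact hab .rfl
  have hedge : (D ⊔ edge a b).Reachable a b := Adj.reachable (by simp [edge_adj, hne])
  have hxy : (D ⊔ edge a b).Reachable x y := by
    rcases (hG.connected.preconnected a b).reachable_deleteEdges_or (x := x) (y := y) with
      h | ⟨ha, hb⟩
    · exact absurd h hab
    · rcases ha with ha | ha <;> rcases hb with hb | hb
      · exact absurd (ha.trans hb.symm) hab
      · exact ((ha.symm.mono hDle).trans hedge).trans (hb.mono hDle)
      · exact ((hb.symm.mono hDle).trans hedge.symm).trans (ha.mono hDle)
      · exact absurd (ha.trans hb.symm) hab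
  refine ⟨(connected_iff_exists_forall_reachable _).mpr ⟨x, fun v => ?_⟩, ?_⟩
  · rcases (hG.connected.preconnected x v).reachable_deleteEdges_or (x := x) (y := y) with
      h | ⟨-, hv⟩
    · exact h.mono hDle
    · rcases hv with hv | hv
      · exact hv.symm.mono hDle
      · exact hxy.trans (hv.symm.mono hDle)
  · exact (hG.isAcyclic.anti (deleteEdges_le _)).sup_edge_of_not_reachable hab

theorem IsAcyclic.not_reachable_deleteEdges_of_mem_edges (hG : G.IsAcyclic) {a b : V}
    {p : G.Walk a b} (hp : p.IsPath) {f : Sym2 V} (hf : f ∈ p.edges) :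
    ¬(G.deleteEdges {f}).Reachable a b := by
  induction f using Sym2.ind with
  | _ x y =>
  rw [reachable_deleteEdges_iff_exists_walk]
  rintro ⟨q, hq⟩
  have hpq : (⟨p, hp⟩ : G.Path a b) = q.toPath := (hG.subsingleton_path a b).elim _ _
  exact hq (q.edges_toPath_subset_edges (congrArg Subtype.val hpq ▸ hf))

end SimpleGraph

open SimpleGraph

theorem graphWeight_deleteEdges_sup_edge [Finite V] (w : Sym2 V → ℝ) {T : SimpleGraph V}
    {f : Sym2 V} (hf : f ∈ T.edgeSet) {a b : V} (hab : a ≠ b) (he : s(a, b) ∉ T.edgeSet) :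
    graphWeight w (T.deleteEdges {f} ⊔ edge a b) = graphWeight w T - w f + w s(a, b) := by
  have hE : (T.deleteEdges {f} ⊔ edge a b).edgeSet.toFinite.toFinset =
      insert s(a, b) (T.edgeSet.toFinite.toFinset.erase f) := by
    ext; simp [edgeSet_edge_of_ne hab, and_comm]
  rw [graphWeight, hE, Finset.sum_insert (by simp [he]), Finset.sum_erase_eq_sub (by simpa),
    graphWeight]
  ring

namespace IsMST

variable [Finite V] {G T : SimpleGraph V} {w : Sym2 V → ℝ}

theorem le_of_not_reachable_deleteEdges (hT : IsMST G w T) {a b : V} (hab : G.Adj a b)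
    {f : Sym2 V} (hf : f ∈ T.edgeSet) (hsep : ¬(T.deleteEdges {f}).Reachable a b) :
    w f ≤ w s(a, b) := by
  obtain ⟨hTG, hTtree, hmin⟩ := hT
  by_cases he : s(a, b) ∈ T.edgeSet
  · have hef : s(a, b) = f :=
      by_contra fun hne => hsep (Adj.reachable (by simpa [hne] using he))
    rw [hef]
  · induction f using Sym2.ind with
    | _ x y =>
    have hle : T.deleteEdges {s(x, y)} ⊔ edge a b ≤ G :=
      sup_le ((deleteEdges_le _).trans hTG) (G.edge_le_iff.mpr (.inr hab))
    have hswap := hmin _ hle (hTtree.isTree_deleteEdges_sup_edge hsep)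
    rw [graphWeight_deleteEdges_sup_edge w hf hab.ne he] at hswap
    linarith

theorem joins_of_forall_lt_mem (hT : IsMST G w T) (hw : Set.InjOn w G.edgeSet)
    {S : Finset (Sym2 V)} {e : Sym2 V} (heG : e ∈ G.edgeSet) (heT : e ∉ T.edgeSet)
    (hS : ∀ f ∈ T.edgeSet, w f < w e → f ∈ S) : Joins S e := by
  induction e using Sym2.ind with
  | _ a b =>
  obtain ⟨p, hp⟩ := hT.2.1.connected.exists_isPath a b
  refine ⟨a, b, rfl, ⟨p.transfer _ fun f hf => ?_⟩⟩
  have hfT : f ∈ T.edgeSet := p.edges_subset_edgeSet hf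
  have hle : w f ≤ w s(a, b) := hT.le_of_not_reachable_deleteEdges heG hfT
    (hT.2.1.isAcyclic.not_reachable_deleteEdges_of_mem_edges hp hf)
  have hne : w f ≠ w s(a, b) := fun h => heT (hw (edgeSet_mono hT.1 hfT) heG h ▸ hfT)
  simpa [hS f hfT (hle.lt_of_ne hne)] using T.not_isDiag_of_mem_edgeSet hfT

end IsMST

theorem not_joins_of_subset {T : SimpleGraph V} (hT : T.IsAcyclic) {S : Finset (Sym2 V)}
    (hS : ↑S ⊆ T.edgeSet) {e : Sym2 V} (heT : e ∈ T.edgeSet) (heS : e ∉ S) : ¬Joins S e := by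
  rintro ⟨a, b, rfl, hr⟩
  refine isAcyclic_iff_forall_isBridge.mp hT heT (hr.mono fun u v huv => ?_)
  obtain ⟨huvS, -⟩ := (fromEdgeSet_adj _).mp huv
  exact (deleteEdges_adj ..).mpr ⟨hS huvS, fun h => heS (Set.mem_singleton_iff.mp h ▸ huvS)⟩

-- The invariant: `S` is the set of tree edges among the edges processed before `L`.
theorem IsMST.coe_foldl_kruskalStep [Finite V] {G T : SimpleGraph V} {w : Sym2 V → ℝ}
    (hT : IsMST G w T) (hw : Set.InjOn w G.edgeSet) {L : List (Sym2 V)}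
    (hLG : ∀ e ∈ L, e ∈ G.edgeSet) (hL : L.Pairwise (fun e f => w e < w f))
    {S : Finset (Sym2 V)} (hST : ↑S ⊆ T.edgeSet) (hSL : ∀ f ∈ S, ∀ e ∈ L, w f < w e)
    (hTS : ∀ f ∈ T.edgeSet, f ∉ S → f ∈ L) :
    ((L.foldl kruskalStep S : Finset (Sym2 V)) : Set (Sym2 V)) = T.edgeSet := by
  induction L generalizing S with
  | nil =>
    exact hST.antisymm fun f hf => by_contra fun hfS => by simpa using hTS f hf hfS
  | cons e L ih =>
    rw [List.pairwise_cons] at hL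
    have heS : e ∉ S := fun he => (hSL e he e List.mem_cons_self).false
    have hlt : ∀ f ∈ T.edgeSet, w f < w e → f ∈ S := fun f hf hfe => by_contra fun hfS => by
      rcases List.mem_cons.mp (hTS f hf hfS) with rfl | hfL
      exacts [hfe.false, (hfe.trans (hL.1 f hfL)).false]
    rw [List.foldl_cons, kruskalStep]
    by_cases heT : e ∈ T.edgeSet
    · rw [if_neg (not_joins_of_subset hT.2.1.isAcyclic hST heT heS)]
      refine ih (fun g hg => hLG g (.tail e hg)) hL.2 ?_ ?_ ?_
      · simpa using Set.insert_subset heT hST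
      · intro f hf g hg
        rcases Finset.mem_insert.mp hf with rfl | hf
        exacts [hL.1 g hg, hSL f hf g (List.mem_cons_of_mem _ hg)]
      · intro f hf hfS
        rcases List.mem_cons.mp (hTS f hf fun h => hfS (Finset.mem_insert_of_mem h)) with rfl | h
        exacts [absurd (Finset.mem_insert_self f S) hfS, h]
    · rw [if_pos (hT.joins_of_forall_lt_mem hw (hLG e List.mem_cons_self) heT hlt)]
      refine ih (fun g hg => hLG g (.tail e hg)) hL.2 hST
        (fun f hf g hg => hSL f hf g (.tail e hg)) fun f hf hfS => ?_
      rcases List.mem_cons.mp (hTS f hf hfS) with rfl | h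
      exacts [absurd hf heT, h]

theorem stmt_7_general [Finite V] (G : SimpleGraph V)
    (w : Sym2 V → ℝ) (hw : Set.InjOn w G.edgeSet)
    (H : SimpleGraph V) (hHG : H ≤ G)
    (T : SimpleGraph V) (hT : IsMST G w T) (hTH : T.edgeSet ⊆ H.edgeSet)
    (L : List (Sym2 V)) (hLmem : ∀ e, e ∈ L ↔ e ∈ H.edgeSet)
    (hsorted : L.Pairwise (fun e f => w e < w f)) :
    (kruskal L : Set (Sym2 V)) = T.edgeSet :=
  hT.coe_foldl_kruskalStep hw (fun e he => edgeSet_mono hHG ((hLmem e).mp he)) hsorted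
    (by simp) (by simp) fun f hf _ => (hLmem f).mpr (hTH hf)

/-- Kruskal's algorithm, run on the edges (sorted by increasing weight) of any
subgraph `H` of a connected graph `G` with distinct edge weights that contains all
the edges of the minimum spanning tree `T` of `G`, outputs exactly the edges of `T`. -/
theorem stmt_7 [Finite V] (G : SimpleGraph V) (hG : G.Connected)
    (w : Sym2 V → ℝ) (hw : Set.InjOn w G.edgeSet)
    (H : SimpleGraph V) (hHG : H ≤ G)
    (T : SimpleGraph V) (hT : IsMST G w T) (hTH : T.edgeSet ⊆ H.edgeSet)
    (L : List (Sym2 V)) (hLmem : ∀ e, e ∈ L ↔ e ∈ H.edgeSet)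
    (hsorted : L.Pairwise (fun e f => w e < w f)) :
    (kruskal L : Set (Sym2 V)) = T.edgeSet :=
  stmt_7_general G w hw H hHG T hT hTH L hLmem hsorted
end
end

section
/- An edge e with distinct endpoints u, v belongs to the minimum spanning tree of a connected graph G with distinct edge weights if and only if u and v lie in different connected components of the subgraph consisting of all edges strictly lighter than e. -/
noncomputable section
open Classical

variable {V : Type*}

/-! An edge `g` of the minimum spanning tree `T` can be exchanged for an edge `ab ∉ T` of `G`
whenever `g` is not a bridge of `T ⊔ ab`: the result is again a spanning tree, so `w g ≤ w ab`.
If `uv ∈ T` and a path of edges lighter than `uv` joined `u` to `v`, one of its edges would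
reconnect the two components of `T \ uv`, and exchanging `uv` for it would make `T` lighter.
If `uv ∉ T`, every edge of the tree path from `u` to `v` lies on a cycle of `T ⊔ uv`, hence is
lighter than `uv` (strictly, as weights are distinct), so that path lies in `G_{<uv}`. -/

namespace SimpleGraph

variable {G : SimpleGraph V}

theorem Preconnected.reachable_deleteEdges_or (hG : G.Preconnected) (a b z : V) :
    (G.deleteEdges {s(a, b)}).Reachable z a ∨ (G.deleteEdges {s(a, b)}).Reachable z b := by
  suffices ∀ {c} (p : G.Walk z c), c = a →
      (G.deleteEdges {s(a, b)}).Reachable z a ∨ (G.deleteEdges {s(a, b)}).Reachable z b from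
    this (hG z a).some rfl
  intro c p
  induction p with
  | nil => rintro rfl; exact Or.inl .rfl
  | @cons x y _ hxy _ ih =>
    intro hc
    by_cases hedge : s(x, y) = s(a, b)
    · rcases Sym2.eq_iff.mp hedge with ⟨hx, -⟩ | ⟨hx, -⟩
      · exact Or.inl (hx ▸ .rfl)
      · exact Or.inr (hx ▸ .rfl)
    · have hxy' : (G.deleteEdges {s(a, b)}).Adj x y := by simpa [hedge] using hxy
      exact (ih hc).imp hxy'.reachable.trans hxy'.reachable.trans

theorem Walk.IsPath.not_isBridge_sup_edge {u v : V} {p : G.Walk u v} (hp : p.IsPath)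
    (huv : ¬G.Adj u v) {g : Sym2 V} (hg : g ∈ p.edges) : ¬(G ⊔ edge u v).IsBridge g := by
  have hne : u ≠ v := by
    rintro rfl
    exact Path.notMem_edges_of_loop (p := ⟨p, hp⟩) hg
  have hadj : (G ⊔ edge u v).Adj v u := Or.inr (by simp [edge_adj, hne.symm])
  let q : (G ⊔ edge u v).Path u v := ⟨p.mapLe le_sup_left, hp.mapLe le_sup_left⟩
  have hcycle : (Walk.cons hadj q.1).IsCycle :=
    Path.cons_isCycle q hadj fun h ↦ huv <|
      (p.adj_of_mem_edges (by simpa [q, Walk.edges_mapLe_eq_edges] using h)).symm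
  intro hbr
  exact hbr.notMem_edges_of_isCycle hcycle (by simp [q, hg])

theorem edgeSet_sup_edge_deleteEdges (G : SimpleGraph V) {a b : V} (hab : a ≠ b)
    {g : Sym2 V} (hg : g ≠ s(a, b)) :
    ((G ⊔ edge a b).deleteEdges {g}).edgeSet = insert s(a, b) (G.edgeSet \ {g}) := by
  rw [edgeSet_deleteEdges, edgeSet_sup, edgeSet_edge_of_ne hab, Set.union_singleton,
    Set.insert_sdiff_singleton_comm hg.symm]

end SimpleGraph

open SimpleGraph

theorem graphWeight_eq_of_edgeSet_eq_exchange [Finite V] (w : Sym2 V → ℝ)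
    {T T' : SimpleGraph V} {e f : Sym2 V} (he : e ∈ T.edgeSet) (hf : f ∉ T.edgeSet)
    (hT' : T'.edgeSet = insert f (T.edgeSet \ {e})) :
    graphWeight w T' = graphWeight w T - w e + w f := by
  have hfin : T'.edgeSet.toFinite.toFinset = insert f (T.edgeSet.toFinite.toFinset.erase e) := by
    ext g
    simp only [Set.Finite.mem_toFinset, hT', Set.mem_insert_iff, Set.mem_sdiff,
      Set.mem_singleton_iff, Finset.mem_insert, Finset.mem_erase]
    tauto
  rw [graphWeight, hfin, Finset.sum_insert (by simp [hf]),
    Finset.sum_erase_eq_sub (by simpa using he), graphWeight]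
  ring

-- the graph `G_{<e}`
def lighterGraph (G : SimpleGraph V) (w : Sym2 V → ℝ) (e : Sym2 V) : SimpleGraph V :=
  fromEdgeSet {f | f ∈ G.edgeSet ∧ w f < w e}

theorem lighterGraph_adj {G : SimpleGraph V} {w : Sym2 V → ℝ} {e : Sym2 V} {x y : V} :
    (lighterGraph G w e).Adj x y ↔ G.Adj x y ∧ w s(x, y) < w e := by
  simp only [lighterGraph, fromEdgeSet_adj, Set.mem_ofPred_eq, mem_edgeSet]
  exact ⟨And.left, fun h ↦ ⟨h, h.1.ne⟩⟩

namespace IsMST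

variable [Finite V] {G T : SimpleGraph V} {w : Sym2 V → ℝ} {u v : V}

theorem weight_le_of_not_isBridge (hT : IsMST G w T) {a b : V} (hab : G.Adj a b)
    (habT : ¬T.Adj a b) {g : Sym2 V} (hg : g ∈ T.edgeSet) (hbr : ¬(T ⊔ edge a b).IsBridge g) :
    w g ≤ w s(a, b) := by
  obtain ⟨hTG, hTtree, hTmin⟩ := hT
  have hgab : g ≠ s(a, b) := by rintro rfl; exact habT hg
  set T' := (T ⊔ edge a b).deleteEdges {g}
  have hE : T'.edgeSet = insert s(a, b) (T.edgeSet \ {g}) :=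
    T.edgeSet_sup_edge_deleteEdges hab.ne hgab
  have hT'conn : T'.Connected := by
    induction g using Sym2.ind
    exact (hTtree.connected.mono le_sup_left).connected_delete_edge_of_not_isBridge hbr
  have hT'tree : T'.IsTree := by
    refine isTree_iff_connected_and_card.mpr ⟨hT'conn, ?_⟩
    rw [Nat.card_coe_set_eq, hE, Set.ncard_exchange (a := s(a, b)) habT hg,
      ← Nat.card_coe_set_eq]
    exact (isTree_iff_connected_and_card.mp hTtree).2
  have hT'G : T' ≤ G := (deleteEdges_le _).trans (sup_le hTG ((edge_le_iff G).mpr (Or.inr hab)))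
  have := hTmin T' hT'G hT'tree
  rw [graphWeight_eq_of_edgeSet_eq_exchange w hg habT hE] at this
  linarith

theorem not_reachable_lighterGraph (hT : IsMST G w T) (huv : T.Adj u v) :
    ¬(lighterGraph G w s(u, v)).Reachable u v := by
  rintro ⟨q⟩
  set T₀ := T.deleteEdges {s(u, v)}
  have hbridge : ¬T₀.Reachable u v := isAcyclic_iff_forall_adj_isBridge.mp hT.2.1.isAcyclic huv
  obtain ⟨⟨⟨x, y⟩, hxy⟩, -, hx, hy⟩ :=
    q.exists_boundary_dart {z | T₀.Reachable u z} .rfl hbridge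
  obtain ⟨hxyG, hlt⟩ := lighterGraph_adj.mp hxy
  simp only [Set.mem_ofPred_eq] at hx hy
  have hvy : T₀.Reachable v y :=
    ((hT.2.1.connected.preconnected.reachable_deleteEdges_or u v y).resolve_left
      fun h ↦ hy h.symm).symm
  have hne : s(x, y) ≠ s(u, v) := fun h ↦ hlt.ne (congrArg w h)
  have hxyT : ¬T.Adj x y := fun h ↦
    hy (hx.trans (Adj.reachable (by simpa [T₀, hne] using h)))
  have hbr : ¬(T ⊔ edge x y).IsBridge s(u, v) := by
    have hmono : T₀ ≤ (T ⊔ edge x y).deleteEdges {s(u, v)} := deleteEdges_mono le_sup_left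
    have hadj : ((T ⊔ edge x y).deleteEdges {s(u, v)}).Adj x y := by
      simp [edge_adj, hxyG.ne, hne]
    rw [isBridge_iff, not_not]
    exact (hx.mono hmono).trans (hadj.reachable.trans (hvy.symm.mono hmono))
  exact (hT.weight_le_of_not_isBridge hxyG hxyT huv hbr).not_gt hlt

theorem adj_of_not_reachable_lighterGraph (hT : IsMST G w T) (hw : Set.InjOn w G.edgeSet)
    (huv : G.Adj u v) (h : ¬(lighterGraph G w s(u, v)).Reachable u v) : T.Adj u v := by
  by_contra huvT
  obtain ⟨p, hp⟩ := hT.2.1.connected.exists_isPath u v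
  refine h ⟨p.transfer _ fun g hg ↦ ?_⟩
  have hgT := p.edges_subset_edgeSet hg
  have hgG := edgeSet_mono hT.1 hgT
  have hle := hT.weight_le_of_not_isBridge huv huvT hgT (hp.not_isBridge_sup_edge huvT hg)
  have hne : w g ≠ w s(u, v) := fun h ↦ huvT ((hw hgG huv h).symm ▸ hgT :)
  rw [lighterGraph, edgeSet_fromEdgeSet]
  exact ⟨⟨hgG, hle.lt_of_ne hne⟩, T.not_isDiag_of_mem_edgeSet hgT⟩

end IsMST

theorem stmt_8_general [Finite V] (G : SimpleGraph V)
    (w : Sym2 V → ℝ) (hw : Set.InjOn w G.edgeSet)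
    (T : SimpleGraph V) (hT : IsMST G w T)
    (u v : V) (huv : G.Adj u v) :
    s(u, v) ∈ T.edgeSet ↔
      ¬ (SimpleGraph.fromEdgeSet {f | f ∈ G.edgeSet ∧ w f < w s(u, v)}).Reachable u v :=
  ⟨hT.not_reachable_lighterGraph, hT.adj_of_not_reachable_lighterGraph hw huv⟩

/-- An edge `uv` of a connected graph `G` with distinct edge weights belongs to the
minimum spanning tree iff `u` and `v` lie in different connected components of the
subgraph of all edges strictly lighter than `uv`. -/
theorem stmt_8 [Finite V] (G : SimpleGraph V) (hG : G.Connected)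
    (w : Sym2 V → ℝ) (hw : Set.InjOn w G.edgeSet)
    (T : SimpleGraph V) (hT : IsMST G w T)
    (u v : V) (huv : G.Adj u v) :
    s(u, v) ∈ T.edgeSet ↔
      ¬ (SimpleGraph.fromEdgeSet {f | f ∈ G.edgeSet ∧ w f < w s(u, v)}).Reachable u v :=
  stmt_8_general G w hw T hT u v huv
end
end

section
/- Cut rule: if all edge weights of a connected graph are distinct, then for any nonempty proper vertex subset S, the lightest edge crossing between S and its complement belongs to the minimum spanning tree. -/
noncomputable section
open Classical

variable {V : Type*}

lemma reach_transfer {T T' : SimpleGraph V}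
    (h : ∀ u v : V, T.Adj u v → T'.Reachable u v) {u v : V}
    (hr : T.Reachable u v) : T'.Reachable u v := by
  obtain ⟨p⟩ := hr
  induction p with
  | nil => exact SimpleGraph.Reachable.refl _
  | cons hadj q ih => exact (h _ _ hadj).trans ih

lemma exists_cross {T : SimpleGraph V} {S : Set V} {u v : V}
    (p : T.Walk u v) (hp : p.IsPath) (hu : u ∈ S) (hv : v ∉ S) :
    ∃ x y : V, x ∈ S ∧ y ∉ S ∧ T.Adj x y ∧ s(x, y) ∈ p.edges ∧
      (T.deleteEdges {s(x, y)}).Reachable u x ∧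
      (T.deleteEdges {s(x, y)}).Reachable y v := by
  induction p with
  | nil => exact absurd hu hv
  | @cons u u' v h q ih =>
    rw [SimpleGraph.Walk.cons_isPath_iff] at hp
    by_cases hu' : u' ∈ S
    · obtain ⟨x, y, hx, hy, hadj, hmem, h1, h2⟩ := ih hp.1 hu' hv
      have hne : s(u, u') ≠ s(x, y) := by
        intro hEq
        rw [Sym2.eq_iff] at hEq
        apply hp.2
        rcases hEq with ⟨hux, -⟩ | ⟨huy, -⟩
        · exact hux ▸ q.fst_mem_support_of_mem_edges hmem
        · exact huy ▸ q.snd_mem_support_of_mem_edges hmem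
      have hadj' : (T.deleteEdges {s(x, y)}).Adj u u' :=
        SimpleGraph.deleteEdges_adj.mpr ⟨h, by simpa using hne⟩
      exact ⟨x, y, hx, hy, hadj, by simp [hmem], hadj'.reachable.trans h1, h2⟩
    · refine ⟨u, u', hu, hu', h, by simp, SimpleGraph.Reachable.refl _, ?_⟩
      have hq : ∀ e ∈ q.edges, e ∉ ({s(u, u')} : Set (Sym2 V)) := by
        intro e he hemem
        rw [Set.mem_singleton_iff] at hemem
        subst hemem
        exact hp.2 (q.fst_mem_support_of_mem_edges he)
      exact ⟨q.toDeleteEdges _ hq⟩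

/-- Cut rule: in a connected graph with pairwise distinct edge weights, for any
nonempty proper vertex subset `S`, the lightest edge crossing between `S` and its
complement belongs to the minimum spanning tree. -/
theorem stmt_15 [Finite V] (G : SimpleGraph V) (hG : G.Connected)
    (w : Sym2 V → ℝ) (hw : Set.InjOn w G.edgeSet)
    (T : SimpleGraph V) (hT : IsMST G w T)
    (S : Set V) (hSne : S.Nonempty) (hSproper : S ≠ Set.univ)
    (a b : V) (ha : a ∈ S) (hb : b ∉ S) (hab : G.Adj a b)
    (hmin : ∀ x y : V, G.Adj x y → x ∈ S → y ∉ S → s(x, y) ≠ s(a, b) →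
      w s(a, b) < w s(x, y)) :
    s(a, b) ∈ T.edgeSet := by
  classical
  by_contra hne
  obtain ⟨hle, htree, hopt⟩ := hT
  have hTconn : T.Connected := htree.isConnected
  have hab' : a ≠ b := fun h => hb (h ▸ ha)
  obtain ⟨p0⟩ := hTconn a b
  obtain ⟨x, y, hx, hy, hxyadj, -, h1, h2⟩ :=
    exists_cross p0.toPath.1 p0.toPath.2 ha hb
  have hxyT : s(x, y) ∈ T.edgeSet := hxyadj
  have hnexy : s(x, y) ≠ s(a, b) := fun h => hne (h ▸ hxyT)
  have hGxy : G.Adj x y := hle hxyadj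
  have hwlt : w s(a, b) < w s(x, y) := hmin x y hGxy hx hy hnexy
  set T' : SimpleGraph V :=
    T.deleteEdges {s(x, y)} ⊔ SimpleGraph.fromEdgeSet {s(a, b)} with hT'def
  -- T' ≤ G
  have hT'le : T' ≤ G := by
    refine sup_le ((SimpleGraph.deleteEdges_le _).trans hle) ?_
    intro u v huv
    rw [SimpleGraph.fromEdgeSet_adj, Set.mem_singleton_iff, Sym2.eq_iff] at huv
    rcases huv.1 with ⟨h1', h2'⟩ | ⟨h1', h2'⟩
    · exact h1' ▸ h2' ▸ hab
    · exact h1' ▸ h2' ▸ hab.symm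
  have hdel_le : T.deleteEdges {s(x, y)} ≤ T' := le_sup_left
  have habT' : T'.Adj a b :=
    (SimpleGraph.sup_adj _ _ _ _).mpr (Or.inr ((SimpleGraph.fromEdgeSet_adj _).mpr ⟨rfl, hab'⟩))
  -- Reachability of x and y in T'
  have hxyreach : T'.Reachable x y :=
    ((h1.mono hdel_le).symm.trans habT'.reachable).trans (h2.mono hdel_le).symm
  -- T' connected
  have hT'conn : T'.Connected := by
    rw [SimpleGraph.connected_iff]
    refine ⟨fun u v => ?_, hTconn.nonempty⟩
    refine reach_transfer (fun u v huv => ?_) (hTconn.preconnected u v)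
    by_cases he : s(u, v) = s(x, y)
    · rw [Sym2.eq_iff] at he
      rcases he with ⟨h1', h2'⟩ | ⟨h1', h2'⟩
      · exact h1' ▸ h2' ▸ hxyreach
      · exact h1' ▸ h2' ▸ hxyreach.symm
    · exact (hdel_le (SimpleGraph.deleteEdges_adj.mpr ⟨huv, by simpa using he⟩)).reachable
  -- edge sets
  have hE' : T'.edgeSet = insert s(a, b) (T.edgeSet \ {s(x, y)}) := by
    rw [hT'def, SimpleGraph.edgeSet_sup, SimpleGraph.edgeSet_deleteEdges,
      SimpleGraph.edgeSet_fromEdgeSet]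
    ext e
    simp only [Set.mem_union, Set.mem_diff, Set.mem_singleton_iff, Set.mem_insert_iff,
      Set.mem_setOf_eq]
    constructor
    · rintro (⟨h1', h2'⟩ | ⟨h1', -⟩)
      · exact Or.inr ⟨h1', h2'⟩
      · exact Or.inl h1'
    · rintro (h' | ⟨h1', h2'⟩)
      · subst h'
        exact Or.inr ⟨rfl, by simp [hab']⟩
      · exact Or.inl ⟨h1', h2'⟩
  -- T' acyclic
  have hT'ac : T'.IsAcyclic := by
    intro v c hc
    by_cases hcab : s(a, b) ∈ c.edges
    · have hkey := SimpleGraph.adj_and_reachable_delete_edges_iff_exists_cycle.mpr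
        ⟨v, c, hc, hcab⟩
      have hle2 : T' \ SimpleGraph.fromEdgeSet {s(a, b)} ≤ T.deleteEdges {s(x, y)} := by
        intro u v' huv
        rw [SimpleGraph.sdiff_adj] at huv
        rcases (SimpleGraph.sup_adj _ _ _ _).mp huv.1 with h' | h'
        · exact h'
        · exact absurd h' huv.2
      have hreachab : (T.deleteEdges {s(x, y)}).Reachable a b := hkey.2.mono hle2
      have hreachxy : (T \ SimpleGraph.fromEdgeSet {s(x, y)}).Reachable x y :=
        (h1.symm.trans (hreachab.trans h2.symm) : (T.deleteEdges {s(x, y)}).Reachable x y)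
      obtain ⟨u', c', hc', -⟩ :=
        SimpleGraph.adj_and_reachable_delete_edges_iff_exists_cycle.mp ⟨hxyadj, hreachxy⟩
      exact htree.IsAcyclic c' hc'
    · have hsub : ∀ e ∈ c.edges, e ∈ T.edgeSet := by
        intro e he
        have hmem : e ∈ T'.edgeSet := c.edges_subset_edgeSet he
        rw [hE'] at hmem
        rcases hmem with h' | ⟨h1', -⟩
        · exact absurd (h' ▸ he) hcab
        · exact h1'
      exact htree.IsAcyclic (c.transfer T hsub) (hc.transfer hsub)
  -- weight computation
  have hF2 : T'.edgeSet.toFinite.toFinset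
      = insert s(a, b) ((T.edgeSet.toFinite.toFinset).erase s(x, y)) := by
    ext e
    simp [hE', Set.Finite.mem_toFinset, Finset.mem_insert, Finset.mem_erase, and_comm]
  have hxyF : s(x, y) ∈ T.edgeSet.toFinite.toFinset := by
    rwa [Set.Finite.mem_toFinset]
  have habF : s(a, b) ∉ (T.edgeSet.toFinite.toFinset).erase s(x, y) := by
    simp only [Finset.mem_erase, Set.Finite.mem_toFinset]
    exact fun h => hne h.2
  have hweight : graphWeight w T' = w s(a, b) + (graphWeight w T - w s(x, y)) := by
    rw [graphWeight, hF2, Finset.sum_insert habF, Finset.sum_erase_eq_sub hxyF]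
    rfl
  have := hopt T' hT'le ⟨hT'conn, hT'ac⟩
  rw [hweight] at this
  linarith
end
end
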